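/- Regard k11(η) as a function of the offset d, namely k11(η)(d) = sin α·(2·d·m_b·(2η·cos(2α) + η + 1) + w·(m_b + m_s)·(cos α − η·cos(3α))), and let d_min = (w·(m_b + m_s)/(2·m_b))·(η·cos(3α) − cos α)/(2η·cos(2α) + η + 1), so that k11(η)(d) > 0 exactly for d ∈ (d_min, ∞). Then the function f(d) = D(α, d)/k11(η)(d) is strictly convex on (d_min, ∞) and attains a unique global minimum there, i.e. there exists a unique d* ∈ (d_min, ∞) with f(d*) ≤ f(d) for all d ∈ (d_min, ∞). -/

import Mathlib

open Real

/-- Solar-radiation-pressure torque coefficient `k11`, regarded as a function of the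
offset `d`. -/
noncomputable def k11 (w mb ms α η : ℝ) (d : ℝ) : ℝ :=
  Real.sin α * (2 * d * mb * (2 * η * Real.cos (2 * α) + η + 1) +
    w * (mb + ms) * (Real.cos α - η * Real.cos (3 * α)))

/-- The inertia-moment contribution `D(α, d)`. -/
noncomputable def Dmom (w mb ms α : ℝ) (d : ℝ) : ℝ :=
  (1 / 6) * ms * w ^ 2 * Real.cos α ^ 2 +
    d ^ 2 * mb ^ 2 * (mb + 2 * ms) / (mb + ms) ^ 2

/-- The critical offset `d_min` below which the sun-pointing attitude is unstable. -/
noncomputable def dmin (w mb ms α η : ℝ) : ℝ :=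
  (w * (mb + ms) / (2 * mb)) *
    ((η * Real.cos (3 * α) - Real.cos α) / (2 * η * Real.cos (2 * α) + η + 1))

private lemma aux_min (c1 c3 t x : ℝ) (hc1 : 0 < c1) (ht : 0 < t) (hx : 0 < x)
    (htsq : c1 * t ^ 2 = c3) : c1 * t + c3 * t⁻¹ ≤ c1 * x + c3 * x⁻¹ := by
  have key : c1 * x + c3 * x⁻¹ - (c1 * t + c3 * t⁻¹) = c1 * (x - t) ^ 2 / x := by
    rw [← htsq]
    field_simp
    ring
  have h5 : 0 ≤ c1 * (x - t) ^ 2 / x := by positivity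
  linarith

private lemma strictConvexOn_congr {s : Set ℝ} {f g : ℝ → ℝ}
    (hf : StrictConvexOn ℝ s f) (h : Set.EqOn f g s) : StrictConvexOn ℝ s g := by
  refine ⟨hf.1, fun x hx y hy hxy a b ha hb hab => ?_⟩
  rw [← h hx, ← h hy, ← h (hf.1 hx hy ha.le hb.le hab)]
  exact hf.2 hx hy hxy ha hb hab

theorem stmt14 (w mb ms α η : ℝ) (hw : 0 < w) (hmb : 0 < mb) (hms : 0 < ms)
    (hα : α ∈ Set.Ioo 0 (π / 2)) (hη : η ∈ Set.Ioo (0:ℝ) 1) :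
    (∀ d : ℝ, k11 w mb ms α η d > 0 ↔ d ∈ Set.Ioi (dmin w mb ms α η)) ∧
    StrictConvexOn ℝ (Set.Ioi (dmin w mb ms α η))
      (fun d => Dmom w mb ms α d / k11 w mb ms α η d) ∧
    (∃! dstar : ℝ, dstar ∈ Set.Ioi (dmin w mb ms α η) ∧
      ∀ d ∈ Set.Ioi (dmin w mb ms α η),
        Dmom w mb ms α dstar / k11 w mb ms α η dstar ≤
        Dmom w mb ms α d / k11 w mb ms α η d) := by
  obtain ⟨hα0, hα2⟩ := hα
  obtain ⟨hη0, hη1⟩ := hη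
  have hπ := Real.pi_pos
  have hs : 0 < Real.sin α := Real.sin_pos_of_pos_of_lt_pi hα0 (by linarith)
  have hcos : 0 < Real.cos α := Real.cos_pos_of_mem_Ioo ⟨by linarith, hα2⟩
  have hC : 0 < 2 * η * Real.cos (2 * α) + η + 1 := by
    nlinarith [Real.neg_one_le_cos (2 * α)]
  have hmbms : 0 < mb + ms := by linarith
  set δ := dmin w mb ms α η with hδdef
  set A : ℝ := 2 * mb * (2 * η * Real.cos (2 * α) + η + 1) with hAdef
  have hA : 0 < A := by positivity
  set sA : ℝ := Real.sin α * A with hsAdef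
  have hsA : 0 < sA := by positivity
  set Q : ℝ := mb ^ 2 * (mb + 2 * ms) / (mb + ms) ^ 2 with hQdef
  have hQ : 0 < Q := by positivity
  set P : ℝ := (1 / 6) * ms * w ^ 2 * Real.cos α ^ 2 with hPdef
  have hP : 0 < P := by positivity
  -- key factorization
  have hk : ∀ d : ℝ, k11 w mb ms α η d = sA * (d - δ) := by
    intro d
    simp only [k11, hsAdef, hAdef, hδdef, dmin]
    have hCne : η * (2 * Real.cos (2 * α) + 1) + 1 ≠ 0 := ne_of_gt (by linarith)
    field_simp
    ring
  have hD : ∀ d : ℝ, Dmom w mb ms α d = P + Q * d ^ 2 := by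
    intro d
    simp only [Dmom, hPdef, hQdef]
    ring
  -- part 1
  have part1 : ∀ d : ℝ, k11 w mb ms α η d > 0 ↔ d ∈ Set.Ioi δ := by
    intro d
    rw [hk d, Set.mem_Ioi]
    constructor
    · intro h
      by_contra hd
      push_neg at hd
      nlinarith
    · intro h
      have : 0 < d - δ := by linarith
      positivity
  set c1 : ℝ := Q / sA with hc1def
  set c2 : ℝ := 2 * Q * δ / sA with hc2def
  set c3 : ℝ := (P + Q * δ ^ 2) / sA with hc3def
  have hc1 : 0 < c1 := by positivity
  have hc3 : 0 < c3 := by positivity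
  set g : ℝ → ℝ := fun d => c1 * (d - δ) + c2 + c3 * (d - δ)⁻¹ with hgdef
  have heq : Set.EqOn g (fun d => Dmom w mb ms α d / k11 w mb ms α η d) (Set.Ioi δ) := by
    intro d hd
    have hd0 : d - δ ≠ 0 := sub_ne_zero.mpr (ne_of_gt hd)
    simp only [hgdef, hk d, hD d, hc1def, hc2def, hc3def]
    field_simp
    ring
  -- derivative facts
  have hg' : ∀ x : ℝ, x ≠ δ → HasDerivAt g (c1 - c3 * ((x - δ) ^ 2)⁻¹) x := by
    intro x hx
    have hx0 : x - δ ≠ 0 := sub_ne_zero.mpr hx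
    have h1 : HasDerivAt (fun d : ℝ => d - δ) 1 x := (hasDerivAt_id x).sub_const δ
    have h2 : HasDerivAt (fun d : ℝ => (d - δ)⁻¹) (-1 / (x - δ) ^ 2) x := h1.inv hx0
    have h3 : HasDerivAt (fun d : ℝ => c1 * (d - δ) + c2) c1 x := by
      simpa using ((h1.const_mul c1).add_const c2)
    have := h3.add (h2.const_mul c3)
    exact this.congr_deriv (by ring)
  have hgconv : StrictConvexOn ℝ (Set.Ioi δ) g := by
    apply strictConvexOn_of_deriv2_pos (convex_Ioi δ)
    · intro x hx
      exact (hg' x (ne_of_gt hx)).continuousAt.continuousWithinAt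
    · rw [interior_Ioi]
      intro x hx
      have hx0 : x - δ ≠ 0 := sub_ne_zero.mpr (ne_of_gt hx)
      have hd1 : Set.EqOn (deriv g) (fun y => c1 - c3 * ((y - δ) ^ 2)⁻¹) (Set.Ioi δ) := by
        intro y hy
        exact (hg' y (ne_of_gt hy)).deriv
      have hev : deriv g =ᶠ[nhds x] fun y => c1 - c3 * ((y - δ) ^ 2)⁻¹ :=
        Filter.eventuallyEq_of_mem (isOpen_Ioi.mem_nhds hx) hd1
      have h4 : HasDerivAt (fun y : ℝ => c1 - c3 * ((y - δ) ^ 2)⁻¹)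
          (2 * c3 * (x - δ) / ((x - δ) ^ 2) ^ 2) x := by
        have h1 : HasDerivAt (fun d : ℝ => (d - δ) ^ 2) (2 * (x - δ)) x := by
          simpa using ((hasDerivAt_id x).sub_const δ).fun_pow 2
        have h2 := (h1.inv (pow_ne_zero 2 hx0)).const_mul c3
        have h3 := h2.const_sub c1
        exact h3.congr_deriv (by ring)
      have : deriv (deriv g) x = 2 * c3 * (x - δ) / ((x - δ) ^ 2) ^ 2 := by
        rw [hev.deriv_eq]
        exact h4.deriv
      simp only [Function.iterate_succ, Function.iterate_zero, Function.comp_apply, id_eq]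
      rw [this]
      have hxδ : 0 < x - δ := sub_pos.mpr hx
      positivity
  have hfconv := strictConvexOn_congr hgconv heq
  refine ⟨part1, hfconv, ?_⟩
  -- existence of minimizer
  set t : ℝ := Real.sqrt (c3 / c1) with htdef
  have ht : 0 < t := Real.sqrt_pos.mpr (by positivity)
  have htsq : c1 * t ^ 2 = c3 := by
    rw [htdef, Real.sq_sqrt (by positivity : (0:ℝ) ≤ c3 / c1)]
    field_simp
  have hmin : ∀ d ∈ Set.Ioi δ, g (δ + t) ≤ g d := by
    intro d hd
    have hdδ : 0 < d - δ := sub_pos.mpr hd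
    simp only [hgdef, add_sub_cancel_left]
    have := aux_min c1 c3 t (d - δ) hc1 ht hdδ htsq
    linarith
  have hmem : δ + t ∈ Set.Ioi δ := Set.mem_Ioi.mpr (lt_add_of_pos_right δ ht)
  refine ⟨δ + t, ⟨hmem, fun d hd => ?_⟩, fun y hy => ?_⟩
  · have e1 := heq hmem
    have e2 := heq hd
    dsimp only at e1 e2
    rw [← e1, ← e2]
    exact hmin d hd
  · obtain ⟨hy1, hy2⟩ := hy
    refine hfconv.eq_of_isMinOn (isMinOn_iff.mpr hy2) (isMinOn_iff.mpr ?_) hy1 hmem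
    intro d hd
    have e1 := heq hmem
    have e2 := heq hd
    dsimp only at e1 e2
    show Dmom w mb ms α (δ + t) / k11 w mb ms α η (δ + t) ≤ Dmom w mb ms α d / k11 w mb ms α η d
    rw [← e1, ← e2]
    exact hmin d hd
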